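/- arXiv:2308.15627 — 2 statements merged into one kernel-verified Lean document; each statement's English description precedes it below -/
import Mathlib

section
/- Let Λ_1, …, Λ_N be i.i.d. random vectors in ℝᵏ with E‖Λ_1‖² < ∞, let F_1, …, F_T be i.i.d. random vectors in ℝᵏ with Σ_F = E[F_1F_1ᵀ], and let (e_{tj})_{t≤T, j≤N} be i.i.d. real random variables with mean 0 and variance σ²; assume the three families (Λ_j), (F_t), (e_{tj}) are mutually independent. Let Q_1, …, Q_N ⊆ {1,…,T} be deterministic sets with |Q_j| ≥ qT for a constant q ∈ (0,1]. Then E‖√(T/N)·∑_{j=1}^N (1/|Q_j|) ∑_{t∈Q_j} e_{tj}·Λ_j F_tᵀ‖_F² ≤ σ²·E‖Λ_1‖²·tr(Σ_F)/q. -/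
/-!
Write the inner sum as `∑_{(t,j)} Y_{tj} e_{tj}` with `Y_{tj} = 1_{t ∈ Q_j} |Q_j|⁻¹ Λ_{jp} F_{tq}`.
The coefficients `Y` are independent of the i.i.d. centred noise `e`, so conditioning on `Y`
kills all cross terms: `E (∑ Y_i e_i)² = σ² ∑ E Y_i²`. Independence of loadings and factors
gives `E Y_{tj}² = |Q_j|⁻² E Λ_{1p}² E F_{1q}²`, and `∑_j |Q_j|⁻¹ ≤ N / (qT)`.
Everything is computed with lower integrals, where these identities hold without any
integrability assumption; the Bochner integrals of the statement are their `toReal`s.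
-/

open MeasureTheory ProbabilityTheory
open scoped ENNReal

lemma ENNReal.toReal_sum_le {ι : Type*} (s : Finset ι) (f : ι → ℝ≥0∞) :
    (∑ i ∈ s, f i).toReal ≤ ∑ i ∈ s, (f i).toReal := by
  by_cases hfin : ∀ i ∈ s, f i ≠ ∞
  · exact (ENNReal.toReal_sum hfin).le
  · push Not at hfin
    rw [ENNReal.sum_eq_top.2 hfin, ENNReal.toReal_top]
    positivity

lemma lintegral_ofReal_sum {Ω ι : Type*} [MeasurableSpace Ω] {μ : Measure Ω} (s : Finset ι)
    (f : ι → Ω → ℝ) (hf : ∀ i ∈ s, Measurable (f i)) (hf_nonneg : ∀ i ∈ s, ∀ ω, 0 ≤ f i ω) :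
    ∫⁻ ω, ENNReal.ofReal (∑ i ∈ s, f i ω) ∂μ = ∑ i ∈ s, ∫⁻ ω, ENNReal.ofReal (f i ω) ∂μ := by
  rw [← lintegral_finsetSum _ fun i hi => (hf i hi).ennreal_ofReal]
  exact lintegral_congr fun ω => ENNReal.ofReal_sum_of_nonneg fun i hi => hf_nonneg i hi ω

lemma integral_sum_eq_toReal_sum_lintegral {Ω ι : Type*} [MeasurableSpace Ω] {μ : Measure Ω}
    (s : Finset ι) (f : ι → Ω → ℝ) (hf : ∀ i ∈ s, Measurable (f i))
    (hf_nonneg : ∀ i ∈ s, ∀ ω, 0 ≤ f i ω) :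
    ∫ ω, ∑ i ∈ s, f i ω ∂μ = (∑ i ∈ s, ∫⁻ ω, ENNReal.ofReal (f i ω) ∂μ).toReal := by
  rw [integral_eq_lintegral_of_nonneg_ae
      (ae_of_all _ fun ω => Finset.sum_nonneg fun i hi => hf_nonneg i hi ω)
      (Finset.measurable_sum _ hf).aestronglyMeasurable,
    lintegral_ofReal_sum s f hf hf_nonneg]

lemma lintegral_ofReal_sq_affine (ν : Measure ℝ) [IsProbabilityMeasure ν]
    (hmean : ∫ t, t ∂ν = 0) (b r : ℝ) :
    ∫⁻ t, ENNReal.ofReal ((b * t + r) ^ 2) ∂ν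
      = (∫⁻ t, ENNReal.ofReal (t ^ 2) ∂ν) * ENNReal.ofReal (b ^ 2) + ENNReal.ofReal (r ^ 2) := by
  have hsq_nonneg (f : ℝ → ℝ) : 0 ≤ᵐ[ν] fun t => f t ^ 2 := ae_of_all _ fun _ => sq_nonneg _
  by_cases hL2 : Integrable (fun t : ℝ => t ^ 2) ν
  · have hL1 : Integrable (fun t : ℝ => t) ν :=
      ((memLp_two_iff_integrable_sq aestronglyMeasurable_id).2 hL2).integrable one_le_two
    have hexpand : (fun t : ℝ => (b * t + r) ^ 2)
        = fun t => b ^ 2 * t ^ 2 + 2 * b * r * t + r ^ 2 := by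
      funext t; ring
    have hint : Integrable (fun t : ℝ => (b * t + r) ^ 2) ν := by
      rw [hexpand]
      exact ((hL2.const_mul _).add (hL1.const_mul _)).add (integrable_const _)
    have hval : ∫ t, (b * t + r) ^ 2 ∂ν = (∫ t, t ^ 2 ∂ν) * b ^ 2 + r ^ 2 := by
      have h₁ : Integrable (fun t : ℝ => b ^ 2 * t ^ 2) ν := hL2.const_mul _
      have h₂ : Integrable (fun t : ℝ => 2 * b * r * t) ν := hL1.const_mul _
      rw [hexpand, integral_add (f := fun t => b ^ 2 * t ^ 2 + 2 * b * r * t) (h₁.add h₂)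
        (integrable_const _), integral_add h₁ h₂, integral_const_mul, integral_const_mul, hmean]
      simp [mul_comm]
    rw [← ofReal_integral_eq_lintegral_ofReal hint (hsq_nonneg _),
      ← ofReal_integral_eq_lintegral_ofReal hL2 (hsq_nonneg id), hval,
      ← ENNReal.ofReal_mul (integral_nonneg fun t => sq_nonneg t),
      ← ENNReal.ofReal_add (by positivity) (sq_nonneg r)]
  · have hm : ∫⁻ t, ENNReal.ofReal (t ^ 2) ∂ν = ∞ := by
      by_contra h
      exact hL2 ((lintegral_ofReal_ne_top_iff_integrable (by fun_prop) (hsq_nonneg id)).1 h)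
    rcases eq_or_ne b 0 with rfl | hb
    · simp
    rw [hm, ENNReal.top_mul (by simpa using hb), top_add]
    by_contra h
    have haff : MemLp (fun t => b * t + r) 2 ν := (memLp_two_iff_integrable_sq (by fun_prop)).2
      ((lintegral_ofReal_ne_top_iff_integrable (by fun_prop) (hsq_nonneg _)).1 h)
    have hid : (fun t => b⁻¹ * ((b * t + r) - r)) = id := by
      funext t; field_simp; simp
    have := (haff.sub (memLp_const r)).const_mul b⁻¹
    rw [Pi.sub_def, hid] at this
    exact hL2 ((memLp_two_iff_integrable_sq aestronglyMeasurable_id).1 this)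

lemma lintegral_ofReal_sq_sum_mul_pi {ι : Type*} [Fintype ι] (ν : Measure ℝ)
    [IsProbabilityMeasure ν] (hmean : ∫ t, t ∂ν = 0) (β : ι → ℝ) :
    ∫⁻ x, ENNReal.ofReal ((∑ i, β i * x i) ^ 2) ∂(Measure.pi fun _ => ν)
      = (∫⁻ t, ENNReal.ofReal (t ^ 2) ∂ν) * ENNReal.ofReal (∑ i, β i ^ 2) := by
  classical
  set m := ∫⁻ t, ENNReal.ofReal (t ^ 2) ∂ν
  have hf : Measurable fun x : ι → ℝ => ENNReal.ofReal ((∑ i, β i * x i) ^ 2) := by fun_prop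
  -- integrating out the coordinates in `s` leaves `m ∑_{i ∈ s} β_i²` plus the square of the rest
  have hmarginal : ∀ s : Finset ι, ∀ x : ι → ℝ,
      (∫⋯∫⁻_s, fun x => ENNReal.ofReal ((∑ i, β i * x i) ^ 2) ∂fun _ => ν) x
        = m * ENNReal.ofReal (∑ i ∈ s, β i ^ 2) + ENNReal.ofReal ((∑ i ∈ sᶜ, β i * x i) ^ 2) := by
    intro s
    induction s using Finset.induction_on with
    | empty => intro x; simp
    | @insert i s hi ih =>
      intro x
      have hupdate : ∀ t, ∑ i' ∈ sᶜ, β i' * Function.update x i t i'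
          = β i * t + ∑ i' ∈ (insert i s)ᶜ, β i' * x i' := by
        intro t
        rw [Finset.compl_insert, ← Finset.add_sum_erase _ _ (Finset.mem_compl.2 hi),
          Function.update_self]
        congr 1
        exact Finset.sum_congr rfl fun i' hi' => by
          rw [Function.update_of_ne (Finset.ne_of_mem_erase hi')]
      simp_rw [lmarginal_insert _ hf hi, ih, hupdate]
      rw [lintegral_add_left measurable_const, lintegral_const, measure_univ, mul_one,
        lintegral_ofReal_sq_affine ν hmean,
        Finset.sum_insert hi, ENNReal.ofReal_add (sq_nonneg _) (by positivity), mul_add]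
      ring
  rw [lintegral_eq_lmarginal_univ 0, hmarginal]
  simp

lemma lintegral_ofReal_sq_sum_mul_of_indepFun {Ω ι : Type*} [MeasurableSpace Ω] {μ : Measure Ω}
    [IsProbabilityMeasure μ] [Fintype ι] (Y X : ι → Ω → ℝ) (hY : ∀ i, Measurable (Y i))
    (hX : ∀ i, Measurable (X i)) (hYX : IndepFun (fun ω i => Y i ω) (fun ω i => X i ω) μ)
    (hXindep : iIndepFun X μ) (Z : Ω → ℝ) (hZ : Measurable Z)
    (hXZ : ∀ i, IdentDistrib (X i) Z μ μ) (hZmean : ∫ ω, Z ω ∂μ = 0) :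
    ∫⁻ ω, ENNReal.ofReal ((∑ i, Y i ω * X i ω) ^ 2) ∂μ
      = (∫⁻ ω, ENNReal.ofReal (Z ω ^ 2) ∂μ) * ∑ i, ∫⁻ ω, ENNReal.ofReal (Y i ω ^ 2) ∂μ := by
  set ν := μ.map Z
  have : IsProbabilityMeasure ν := Measure.isProbabilityMeasure_map hZ.aemeasurable
  have hmean : ∫ t, t ∂ν = 0 := (integral_map hZ.aemeasurable aestronglyMeasurable_id).trans hZmean
  rw [← lintegral_map (f := fun t => ENNReal.ofReal (t ^ 2)) (by fun_prop) hZ]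
  have hYv : Measurable fun ω i => Y i ω := measurable_pi_lambda _ hY
  have hXv : Measurable fun ω i => X i ω := measurable_pi_lambda _ hX
  have hlawX : μ.map (fun ω i => X i ω) = Measure.pi fun _ => ν := by
    rw [hXindep.map_fun_eq_pi_map fun i => (hX i).aemeasurable]
    simp_rw [fun i => (hXZ i).map_eq, ν]
  have hlaw : μ.map (fun ω => ((fun i => Y i ω), fun i => X i ω))
      = (μ.map fun ω i => Y i ω).prod (Measure.pi fun _ => ν) := by
    rw [hYX.map_prod_eq_prod_map_map hYv.aemeasurable hXv.aemeasurable, hlawX]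
  have hg : Measurable fun z : (ι → ℝ) × (ι → ℝ) => ENNReal.ofReal ((∑ i, z.1 i * z.2 i) ^ 2) := by
    fun_prop
  calc ∫⁻ ω, ENNReal.ofReal ((∑ i, Y i ω * X i ω) ^ 2) ∂μ
      = ∫⁻ y, ∫⁻ x, ENNReal.ofReal ((∑ i, y i * x i) ^ 2) ∂(Measure.pi fun _ => ν)
          ∂(μ.map fun ω i => Y i ω) := by
        rw [← lintegral_prod _ hg.aemeasurable, ← hlaw, lintegral_map hg (hYv.prodMk hXv)]
    _ = ∫⁻ y, (∫⁻ t, ENNReal.ofReal (t ^ 2) ∂ν) * ENNReal.ofReal (∑ i, y i ^ 2)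
          ∂(μ.map fun ω i => Y i ω) := by
        simp_rw [lintegral_ofReal_sq_sum_mul_pi ν hmean]
    _ = (∫⁻ t, ENNReal.ofReal (t ^ 2) ∂ν) * ∑ i, ∫⁻ ω, ENNReal.ofReal (Y i ω ^ 2) ∂μ := by
        rw [lintegral_const_mul _ (by fun_prop), lintegral_map (by fun_prop) hYv,
          lintegral_ofReal_sum _ _ (fun i _ => by fun_prop) fun i _ ω => sq_nonneg _]

lemma indepFun_and_indepFun_prodMk_of_iIndep_iSup_comap {Ω ι κ τ α β γ : Type*}
    [MeasurableSpace Ω] {μ : Measure Ω} [MeasurableSpace α] [MeasurableSpace β]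
    [MeasurableSpace γ] {X : ι → Ω → α} {Y : κ → Ω → β} {Z : τ → Ω → γ}
    (hX : ∀ i, Measurable (X i)) (hY : ∀ j, Measurable (Y j)) (hZ : ∀ k, Measurable (Z k))
    (hXYZ : iIndep ![⨆ i, MeasurableSpace.comap (X i) inferInstance,
      ⨆ j, MeasurableSpace.comap (Y j) inferInstance,
      ⨆ k, MeasurableSpace.comap (Z k) inferInstance] μ) :
    IndepFun (fun ω i => X i ω) (fun ω j => Y j ω) μ ∧
      IndepFun (fun ω => ((fun i => X i ω), fun j => Y j ω)) (fun ω k => Z k ω) μ := by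
  rw [← MeasurableSpace.comap_process_pi X, ← MeasurableSpace.comap_process_pi Y,
    ← MeasurableSpace.comap_process_pi Z] at hXYZ
  refine ⟨(IndepFun_iff_Indep _ _ μ).2 (hXYZ.indep (i := 0) (j := 1) (by decide)), ?_⟩
  have h_le : ∀ i, ![MeasurableSpace.comap (fun ω i => X i ω) inferInstance,
      MeasurableSpace.comap (fun ω j => Y j ω) inferInstance,
      MeasurableSpace.comap (fun ω k => Z k ω) inferInstance] i ≤ ‹MeasurableSpace Ω› := by
    intro i; fin_cases i
    exacts [(measurable_pi_lambda _ hX).comap_le, (measurable_pi_lambda _ hY).comap_le,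
      (measurable_pi_lambda _ hZ).comap_le]
  have := indep_iSup_of_disjoint h_le hXYZ (S := {0, 1}) (T := {2})
    (Set.disjoint_singleton_right.2 (by simp))
  rw [IndepFun_iff_Indep]
  convert this using 1
  · exact (MeasurableSpace.comap_prodMk _ _).trans (by simp)
  · simp

lemma lintegral_ofReal_sq_mul_of_indepFun {Ω : Type*} [MeasurableSpace Ω] {μ : Measure Ω}
    {X Y : Ω → ℝ} (hX : Measurable X) (hY : Measurable Y) (hXY : IndepFun X Y μ) :
    ∫⁻ ω, ENNReal.ofReal ((X ω * Y ω) ^ 2) ∂μ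
      = (∫⁻ ω, ENNReal.ofReal (X ω ^ 2) ∂μ) * ∫⁻ ω, ENNReal.ofReal (Y ω ^ 2) ∂μ := by
  simp_rw [mul_pow, ENNReal.ofReal_mul (sq_nonneg _)]
  exact lintegral_mul_eq_lintegral_mul_lintegral_of_indepFun'' (by fun_prop) (by fun_prop)
    (hXY.comp (φ := fun x => ENNReal.ofReal (x ^ 2)) (ψ := fun y => ENNReal.ofReal (y ^ 2))
      (by fun_prop) (by fun_prop))

lemma sum_lintegral_ofReal_sq_weighted_mul {Ω ι κ n : Type*} [MeasurableSpace Ω]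
    {μ : Measure Ω} [Fintype ι] [Fintype κ] (Λ : ι → Ω → n → ℝ) (F : κ → Ω → n → ℝ)
    (hΛ : ∀ j, Measurable (Λ j)) (hF : ∀ t, Measurable (F t))
    (hΛF : IndepFun (fun ω j => Λ j ω) (fun ω t => F t ω) μ)
    (j₀ : ι) (hΛident : ∀ j, IdentDistrib (Λ j) (Λ j₀) μ μ)
    (t₀ : κ) (hFident : ∀ t, IdentDistrib (F t) (F t₀) μ μ) (w : κ × ι → ℝ) (p q : n) :
    ∑ tj : κ × ι, ∫⁻ ω, ENNReal.ofReal ((w tj * (Λ tj.2 ω p * F tj.1 ω q)) ^ 2) ∂μ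
      = ENNReal.ofReal (∑ tj, w tj ^ 2) *
        ((∫⁻ ω, ENNReal.ofReal (Λ j₀ ω p ^ 2) ∂μ) * ∫⁻ ω, ENNReal.ofReal (F t₀ ω q ^ 2) ∂μ) := by
  have hterm : ∀ tj : κ × ι,
      ∫⁻ ω, ENNReal.ofReal ((w tj * (Λ tj.2 ω p * F tj.1 ω q)) ^ 2) ∂μ
        = ENNReal.ofReal (w tj ^ 2) * ((∫⁻ ω, ENNReal.ofReal (Λ j₀ ω p ^ 2) ∂μ)
          * ∫⁻ ω, ENNReal.ofReal (F t₀ ω q ^ 2) ∂μ) := by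
    rintro ⟨t, j⟩
    have hindep : IndepFun (fun ω => Λ j ω p) (fun ω => F t ω q) μ :=
      hΛF.comp (φ := fun x : ι → n → ℝ => x j p) (ψ := fun y : κ → n → ℝ => y t q)
        (by fun_prop) (by fun_prop)
    have hΛj : ∫⁻ ω, ENNReal.ofReal (Λ j ω p ^ 2) ∂μ = ∫⁻ ω, ENNReal.ofReal (Λ j₀ ω p ^ 2) ∂μ :=
      ((hΛident j).comp (u := fun x : n → ℝ => ENNReal.ofReal (x p ^ 2)) (by fun_prop)).lintegral_eq
    have hFt : ∫⁻ ω, ENNReal.ofReal (F t ω q ^ 2) ∂μ = ∫⁻ ω, ENNReal.ofReal (F t₀ ω q ^ 2) ∂μ :=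
      ((hFident t).comp (u := fun y : n → ℝ => ENNReal.ofReal (y q ^ 2)) (by fun_prop)).lintegral_eq
    simp_rw [mul_pow (w _), ENNReal.ofReal_mul (sq_nonneg _)]
    rw [lintegral_const_mul _ (by fun_prop),
      lintegral_ofReal_sq_mul_of_indepFun (by fun_prop) (by fun_prop) hindep, hΛj, hFt]
  rw [Finset.sum_congr rfl fun tj _ => hterm tj, ← Finset.sum_mul,
    ENNReal.ofReal_sum_of_nonneg fun tj _ => sq_nonneg (w tj)]

section WeightedNoise

variable {Ω ι κ n : Type*} [MeasurableSpace Ω] {μ : Measure Ω} [IsProbabilityMeasure μ]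
  [Fintype ι] [Fintype κ]

lemma lintegral_ofReal_sq_weighted_noise_sum (Λ : ι → Ω → n → ℝ) (F : κ → Ω → n → ℝ)
    (e : κ → ι → Ω → ℝ) (hΛ : ∀ j, Measurable (Λ j)) (hF : ∀ t, Measurable (F t))
    (he : ∀ t j, Measurable (e t j))
    (hΛF : IndepFun (fun ω j => Λ j ω) (fun ω t => F t ω) μ)
    (hΛFe : IndepFun (fun ω => ((fun j => Λ j ω), fun t => F t ω))
      (fun ω (tj : κ × ι) => e tj.1 tj.2 ω) μ)
    (heindep : iIndepFun (fun tj : κ × ι => e tj.1 tj.2) μ)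
    (j₀ : ι) (t₀ : κ) (hΛident : ∀ j, IdentDistrib (Λ j) (Λ j₀) μ μ)
    (hFident : ∀ t, IdentDistrib (F t) (F t₀) μ μ)
    (heident : ∀ t j, IdentDistrib (e t j) (e t₀ j₀) μ μ) (hemean : ∫ ω, e t₀ j₀ ω ∂μ = 0)
    (w : κ × ι → ℝ) (p q : n) :
    ∫⁻ ω, ENNReal.ofReal ((∑ tj, (w tj * (Λ tj.2 ω p * F tj.1 ω q)) * e tj.1 tj.2 ω) ^ 2) ∂μ
      = (∫⁻ ω, ENNReal.ofReal (e t₀ j₀ ω ^ 2) ∂μ) * (ENNReal.ofReal (∑ tj, w tj ^ 2) *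
        ((∫⁻ ω, ENNReal.ofReal (Λ j₀ ω p ^ 2) ∂μ) * ∫⁻ ω, ENNReal.ofReal (F t₀ ω q ^ 2) ∂μ)) := by
  have hYe : IndepFun (fun ω (tj : κ × ι) => w tj * (Λ tj.2 ω p * F tj.1 ω q))
      (fun ω (tj : κ × ι) => e tj.1 tj.2 ω) μ :=
    hΛFe.comp (φ := fun (v : (ι → n → ℝ) × (κ → n → ℝ)) tj => w tj * (v.1 tj.2 p * v.2 tj.1 q))
      (by fun_prop) measurable_id
  rw [lintegral_ofReal_sq_sum_mul_of_indepFun (fun tj ω => w tj * (Λ tj.2 ω p * F tj.1 ω q))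
      (fun tj => e tj.1 tj.2) (fun _ => by fun_prop) (fun _ => by fun_prop) hYe heindep _
      (he t₀ j₀) (fun tj => heident tj.1 tj.2) hemean,
    sum_lintegral_ofReal_sq_weighted_mul Λ F hΛ hF hΛF j₀ hΛident t₀ hFident]

lemma integral_sum_sq_weighted_noise_le [Fintype n] (Λ : ι → Ω → n → ℝ) (F : κ → Ω → n → ℝ)
    (e : κ → ι → Ω → ℝ) (hΛ : ∀ j, Measurable (Λ j)) (hF : ∀ t, Measurable (F t))
    (he : ∀ t j, Measurable (e t j))
    (hΛF : IndepFun (fun ω j => Λ j ω) (fun ω t => F t ω) μ)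
    (hΛFe : IndepFun (fun ω => ((fun j => Λ j ω), fun t => F t ω))
      (fun ω (tj : κ × ι) => e tj.1 tj.2 ω) μ)
    (heindep : iIndepFun (fun tj : κ × ι => e tj.1 tj.2) μ)
    (j₀ : ι) (t₀ : κ) (hΛident : ∀ j, IdentDistrib (Λ j) (Λ j₀) μ μ)
    (hFident : ∀ t, IdentDistrib (F t) (F t₀) μ μ)
    (heident : ∀ t j, IdentDistrib (e t j) (e t₀ j₀) μ μ) (hemean : ∫ ω, e t₀ j₀ ω ∂μ = 0)
    (w : κ × ι → ℝ) :
    ∫ ω, ∑ p, ∑ q, (∑ tj, (w tj * (Λ tj.2 ω p * F tj.1 ω q)) * e tj.1 tj.2 ω) ^ 2 ∂μ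
      ≤ (∫ ω, e t₀ j₀ ω ^ 2 ∂μ) * (∑ tj, w tj ^ 2) * (∫ ω, ∑ p, Λ j₀ ω p ^ 2 ∂μ)
        * ∑ q, ∫ ω, F t₀ ω q ^ 2 ∂μ := by
  set m := ∫⁻ ω, ENNReal.ofReal (e t₀ j₀ ω ^ 2) ∂μ
  set a := fun p => ∫⁻ ω, ENNReal.ofReal (Λ j₀ ω p ^ 2) ∂μ
  set c := fun q => ∫⁻ ω, ENNReal.ofReal (F t₀ ω q ^ 2) ∂μ
  have htoReal : ∀ f : Ω → ℝ, Measurable f → ∫ ω, f ω ^ 2 ∂μ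
      = (∫⁻ ω, ENNReal.ofReal (f ω ^ 2) ∂μ).toReal := fun f hf =>
    integral_eq_lintegral_of_nonneg_ae (ae_of_all _ fun ω => sq_nonneg _) (by fun_prop)
  have hsum : ∑ p, ∫⁻ ω, ENNReal.ofReal
        (∑ q, (∑ tj, (w tj * (Λ tj.2 ω p * F tj.1 ω q)) * e tj.1 tj.2 ω) ^ 2) ∂μ
      = m * (ENNReal.ofReal (∑ tj, w tj ^ 2) * ((∑ p, a p) * ∑ q, c q)) :=
    calc _ = ∑ p, ∑ q, m * (ENNReal.ofReal (∑ tj, w tj ^ 2) * (a p * c q)) :=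
          Finset.sum_congr rfl fun p _ => by
            rw [lintegral_ofReal_sum _ _ (fun q _ => by fun_prop) fun q _ ω => sq_nonneg _]
            exact Finset.sum_congr rfl fun q _ => lintegral_ofReal_sq_weighted_noise_sum Λ F e
              hΛ hF he hΛF hΛFe heindep j₀ t₀ hΛident hFident heident hemean w p q
      _ = _ := by simp_rw [Finset.sum_mul_sum, Finset.mul_sum]
  rw [integral_sum_eq_toReal_sum_lintegral _ _ (fun p _ => by fun_prop)
      fun p _ ω => Finset.sum_nonneg fun q _ => sq_nonneg _, hsum,
    integral_sum_eq_toReal_sum_lintegral _ _ (fun p _ => by fun_prop) fun p _ ω => sq_nonneg _,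
    htoReal _ (he t₀ j₀), ENNReal.toReal_mul, ENNReal.toReal_mul, ENNReal.toReal_mul,
    ENNReal.toReal_ofReal (Finset.sum_nonneg fun tj _ => sq_nonneg (w tj))]
  calc _ ≤ m.toReal * ((∑ tj, w tj ^ 2) * ((∑ p, a p).toReal * ∑ q, (c q).toReal)) := by
        gcongr
        exact ENNReal.toReal_sum_le _ _
    _ = _ := by
        simp_rw [htoReal _ ((hF t₀).eval), c]
        ring

end WeightedNoise

lemma sum_inv_card_mul_sum_eq_sum_prod {ι κ : Type*} [Fintype ι] [Fintype κ] [DecidableEq κ]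
    (Q : ι → Finset κ) (x y : κ → ι → ℝ) :
    ∑ j, ((Q j).card : ℝ)⁻¹ * ∑ t ∈ Q j, x t j * y t j
      = ∑ tj : κ × ι, ((if tj.1 ∈ Q tj.2 then ((Q tj.2).card : ℝ)⁻¹ else 0) * y tj.1 tj.2)
          * x tj.1 tj.2 := by
  rw [Fintype.sum_prod_type, Finset.sum_comm]
  refine Finset.sum_congr rfl fun j _ => ?_
  simp_rw [ite_mul, zero_mul]
  rw [Finset.sum_ite_mem, Finset.univ_inter, Finset.mul_sum]
  exact Finset.sum_congr rfl fun t _ => by ring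

lemma sum_sq_inv_card_indicator {ι κ : Type*} [Fintype ι] [Fintype κ] [DecidableEq κ]
    (Q : ι → Finset κ) :
    ∑ tj : κ × ι, (if tj.1 ∈ Q tj.2 then ((Q tj.2).card : ℝ)⁻¹ else 0) ^ 2
      = ∑ j, ((Q j).card : ℝ)⁻¹ := by
  rw [Fintype.sum_prod_type, Finset.sum_comm]
  refine Finset.sum_congr rfl fun j _ => ?_
  simp_rw [ite_pow, zero_pow two_ne_zero]
  rw [Finset.sum_ite_mem, Finset.univ_inter, Finset.sum_const, nsmul_eq_mul]
  rcases eq_or_ne ((Q j).card : ℝ) 0 with h | h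
  · simp [h]
  · field_simp

lemma sum_sq_inv_card_indicator_le {ι κ : Type*} [Fintype ι] [Fintype κ] [DecidableEq κ]
    (Q : ι → Finset κ) {c : ℝ} (hc : 0 < c) (hQ : ∀ j, c ≤ (Q j).card) :
    ∑ tj : κ × ι, (if tj.1 ∈ Q tj.2 then ((Q tj.2).card : ℝ)⁻¹ else 0) ^ 2
      ≤ Fintype.card ι / c := by
  rw [sum_sq_inv_card_indicator, div_eq_mul_inv, ← nsmul_eq_mul, ← Finset.card_univ]
  exact Finset.sum_le_card_nsmul _ _ _ fun j _ => inv_anti₀ hc (hQ j)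

theorem stmt_6_general {Ω : Type*} [MeasurableSpace Ω] {μ : Measure Ω} [IsProbabilityMeasure μ]
    (k N T : ℕ) (hN : 0 < N) (hT : 0 < T)
    (Λ : Fin N → Ω → Fin k → ℝ) (F : Fin T → Ω → Fin k → ℝ)
    (e : Fin T → Fin N → Ω → ℝ)
    (hΛmeas : ∀ j, Measurable (Λ j)) (hFmeas : ∀ t, Measurable (F t))
    (hemeas : ∀ t j, Measurable (e t j))
    (hΛident : ∀ j, IdentDistrib (Λ j) (Λ ⟨0, hN⟩) μ μ)
    (hFident : ∀ t, IdentDistrib (F t) (F ⟨0, hT⟩) μ μ)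
    (SigF : Matrix (Fin k) (Fin k) ℝ)
    (hSigF : ∀ p q', SigF p q' = ∫ ω, F ⟨0, hT⟩ ω p * F ⟨0, hT⟩ ω q' ∂μ)
    (heindep : iIndepFun (fun tj : Fin T × Fin N => e tj.1 tj.2) μ)
    (heident : ∀ t j, IdentDistrib (e t j) (e ⟨0, hT⟩ ⟨0, hN⟩) μ μ)
    (σ2 : ℝ)
    (hemean : ∫ ω, e ⟨0, hT⟩ ⟨0, hN⟩ ω ∂μ = 0)
    (hevar : ∫ ω, (e ⟨0, hT⟩ ⟨0, hN⟩ ω) ^ 2 ∂μ = σ2)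
    (hmutind : iIndep
      ![⨆ j, MeasurableSpace.comap (Λ j) inferInstance,
        ⨆ t, MeasurableSpace.comap (F t) inferInstance,
        ⨆ tj : Fin T × Fin N, MeasurableSpace.comap (e tj.1 tj.2) inferInstance] μ)
    (Q : Fin N → Finset (Fin T)) (q : ℝ) (hq0 : 0 < q)
    (hQ : ∀ j, q * T ≤ ((Q j).card : ℝ)) :
    ∫ ω, ∑ p, ∑ q', (Real.sqrt ((T : ℝ) / N) *
        ∑ j, ((Q j).card : ℝ)⁻¹ * ∑ t ∈ Q j, e t j ω * (Λ j ω p * F t ω q')) ^ 2 ∂μ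
      ≤ σ2 * (∫ ω, ∑ p, (Λ ⟨0, hN⟩ ω p) ^ 2 ∂μ) * Matrix.trace SigF / q := by
  classical
  obtain ⟨hΛF, hΛFe⟩ := indepFun_and_indepFun_prodMk_of_iIndep_iSup_comap
    (Z := fun tj : Fin T × Fin N => e tj.1 tj.2) hΛmeas hFmeas (fun tj => hemeas tj.1 tj.2) hmutind
  set w : Fin T × Fin N → ℝ := fun tj => if tj.1 ∈ Q tj.2 then ((Q tj.2).card : ℝ)⁻¹ else 0
  have hw : ∑ tj, w tj ^ 2 ≤ N / (q * T) :=
    (sum_sq_inv_card_indicator_le Q (by positivity) hQ).trans_eq (by simp)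
  have hsum : ∀ p q' ω, ∑ j, ((Q j).card : ℝ)⁻¹ * ∑ t ∈ Q j, e t j ω * (Λ j ω p * F t ω q')
      = ∑ tj, (w tj * (Λ tj.2 ω p * F tj.1 ω q')) * e tj.1 tj.2 ω := fun p q' ω =>
    sum_inv_card_mul_sum_eq_sum_prod Q (fun t j => e t j ω) fun t j => Λ j ω p * F t ω q'
  have htrace : Matrix.trace SigF = ∑ q', ∫ ω, F ⟨0, hT⟩ ω q' ^ 2 ∂μ := by
    simp_rw [Matrix.trace, Matrix.diag_apply, hSigF, sq]
  have hσ2_nonneg : 0 ≤ σ2 := hevar ▸ integral_nonneg fun ω => sq_nonneg _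
  have htrace_nonneg : 0 ≤ Matrix.trace SigF := htrace ▸ by positivity
  simp_rw [mul_pow, Real.sq_sqrt (by positivity : (0 : ℝ) ≤ T / N), ← Finset.mul_sum, hsum]
  rw [integral_const_mul]
  calc _ ≤ T / N * (σ2 * (∑ tj, w tj ^ 2) * (∫ ω, ∑ p, Λ ⟨0, hN⟩ ω p ^ 2 ∂μ)
        * Matrix.trace SigF) := by
        rw [htrace, ← hevar]
        gcongr
        exact integral_sum_sq_weighted_noise_le Λ F e hΛmeas hFmeas hemeas hΛF hΛFe heindep _ _
          hΛident hFident heident hemean w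
    _ ≤ T / N * (σ2 * (N / (q * T)) * (∫ ω, ∑ p, Λ ⟨0, hN⟩ ω p ^ 2 ∂μ) * Matrix.trace SigF) := by
        gcongr
    _ = σ2 * (∫ ω, ∑ p, (Λ ⟨0, hN⟩ ω p) ^ 2 ∂μ) * Matrix.trace SigF / q := by
        field_simp

/-- For i.i.d. loadings `Λ₁, …, Λ_N` in `ℝᵏ` with `E‖Λ₁‖² < ∞`, i.i.d. factors
`F₁, …, F_T` in `ℝᵏ` with `Σ_F = E[F₁F₁ᵀ]`, and i.i.d. errors `(e_{tj})` with mean `0` and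
variance `σ²`, the three families mutually independent, and deterministic sets
`Q_j ⊆ {1,…,T}` with `|Q_j| ≥ qT` for `q ∈ (0,1]`:
`E‖√(T/N)·∑_j (1/|Q_j|)∑_{t∈Q_j} e_{tj}·Λ_j F_tᵀ‖_F² ≤ σ²·E‖Λ₁‖²·tr(Σ_F)/q`. -/
theorem stmt_6 {Ω : Type*} [MeasurableSpace Ω] {μ : Measure Ω} [IsProbabilityMeasure μ]
    (k N T : ℕ) (hk : 0 < k) (hN : 0 < N) (hT : 0 < T)
    (Λ : Fin N → Ω → Fin k → ℝ) (F : Fin T → Ω → Fin k → ℝ)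
    (e : Fin T → Fin N → Ω → ℝ)
    (hΛmeas : ∀ j, Measurable (Λ j)) (hFmeas : ∀ t, Measurable (F t))
    (hemeas : ∀ t j, Measurable (e t j))
    (hΛindep : iIndepFun Λ μ)
    (hΛident : ∀ j, IdentDistrib (Λ j) (Λ ⟨0, hN⟩) μ μ)
    (hΛ2 : Integrable (fun ω => ∑ p, (Λ ⟨0, hN⟩ ω p) ^ 2) μ)
    (hFindep : iIndepFun F μ)
    (hFident : ∀ t, IdentDistrib (F t) (F ⟨0, hT⟩) μ μ)
    (SigF : Matrix (Fin k) (Fin k) ℝ)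
    (hSigF : ∀ p q', SigF p q' = ∫ ω, F ⟨0, hT⟩ ω p * F ⟨0, hT⟩ ω q' ∂μ)
    (heindep : iIndepFun (fun tj : Fin T × Fin N => e tj.1 tj.2) μ)
    (heident : ∀ t j, IdentDistrib (e t j) (e ⟨0, hT⟩ ⟨0, hN⟩) μ μ)
    (σ2 : ℝ)
    (hemean : ∫ ω, e ⟨0, hT⟩ ⟨0, hN⟩ ω ∂μ = 0)
    (hevar : ∫ ω, (e ⟨0, hT⟩ ⟨0, hN⟩ ω) ^ 2 ∂μ = σ2)
    (hmutind : iIndep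
      ![⨆ j, MeasurableSpace.comap (Λ j) inferInstance,
        ⨆ t, MeasurableSpace.comap (F t) inferInstance,
        ⨆ tj : Fin T × Fin N, MeasurableSpace.comap (e tj.1 tj.2) inferInstance] μ)
    (Q : Fin N → Finset (Fin T)) (q : ℝ) (hq0 : 0 < q) (hq1 : q ≤ 1)
    (hQ : ∀ j, q * T ≤ ((Q j).card : ℝ)) :
    ∫ ω, ∑ p, ∑ q', (Real.sqrt ((T : ℝ) / N) *
        ∑ j, ((Q j).card : ℝ)⁻¹ * ∑ t ∈ Q j, e t j ω * (Λ j ω p * F t ω q')) ^ 2 ∂μ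
      ≤ σ2 * (∫ ω, ∑ p, (Λ ⟨0, hN⟩ ω p) ^ 2 ∂μ) * Matrix.trace SigF / q :=
  stmt_6_general k N T hN hT Λ F e hΛmeas hFmeas hemeas hΛident hFident SigF hSigF heindep heident
    σ2 hemean hevar hmutind Q q hq0 hQ
end

section
/- Let σ_{Λ_x}², σ_{Λ_y}², σ_{e_x}², σ_{e_y}² > 0, p ∈ (0,1], a > 0, K ∈ ℝ, and L > 0 be constants, and define Σ_C : (0,∞) → ℝ by Σ_C(γ) = K + L·(σ_{Λ_x}² + γ·a·p·σ_{Λ_y}²)^{−2}·(a·σ_{Λ_x}²·σ_{e_x}² + γ²·a²·p·σ_{Λ_y}²·σ_{e_y}²). Then γ* = σ_{e_x}²/σ_{e_y}² is the unique global minimizer of Σ_C on (0,∞); that is, Σ_C(γ) > Σ_C(γ*) for every γ > 0 with γ ≠ γ*. -/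
/-- With positive constants `σ_{Λx}², σ_{Λy}², σ_{ex}², σ_{ey}²`, `p ∈ (0,1]`,
`a > 0`, `K ∈ ℝ`, `L > 0`, the function
`Σ_C(γ) = K + L·(σ_{Λx}² + γ·a·p·σ_{Λy}²)^{−2}·(a·σ_{Λx}²·σ_{ex}² + γ²·a²·p·σ_{Λy}²·σ_{ey}²)`
has `γ* = σ_{ex}²/σ_{ey}²` as its unique global minimizer on `(0,∞)`:
`Σ_C(γ*) < Σ_C(γ)` for every `γ > 0` with `γ ≠ γ*`. -/
theorem stmt_8 (sΛx2 sΛy2 sex2 sey2 : ℝ)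
    (hΛx : 0 < sΛx2) (hΛy : 0 < sΛy2) (hex : 0 < sex2) (hey : 0 < sey2)
    (p : ℝ) (hp0 : 0 < p) (hp1 : p ≤ 1)
    (a : ℝ) (ha : 0 < a) (K L : ℝ) (hL : 0 < L)
    (SigC : ℝ → ℝ)
    (hSigC : ∀ γ, SigC γ = K + L * ((sΛx2 + γ * a * p * sΛy2) ^ 2)⁻¹ *
        (a * sΛx2 * sex2 + γ ^ 2 * a ^ 2 * p * sΛy2 * sey2)) :
    ∀ γ : ℝ, 0 < γ → γ ≠ sex2 / sey2 → SigC (sex2 / sey2) < SigC γ := by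
  intro γ hγ hne
  rw [hSigC, hSigC]
  have hgs : (0:ℝ) < sex2 / sey2 := div_pos hex hey
  have hD : 0 < sΛx2 + γ * a * p * sΛy2 := by positivity
  have hDs : 0 < sΛx2 + (sex2 / sey2) * a * p * sΛy2 := by positivity
  have hD2 : 0 < (sΛx2 + γ * a * p * sΛy2) ^ 2 := by positivity
  have hDs2 : 0 < (sΛx2 + (sex2 / sey2) * a * p * sΛy2) ^ 2 := by positivity
  have hne0 : γ * sey2 - sex2 ≠ 0 := by
    intro h
    exact hne (by field_simp; linarith)
  have hsq : 0 < (γ * sey2 - sex2) ^ 2 :=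
    lt_of_le_of_ne (sq_nonneg _) (Ne.symm (pow_ne_zero 2 hne0))
  have h2 : (a * sΛx2 * sex2 + (sex2 / sey2) ^ 2 * a ^ 2 * p * sΛy2 * sey2) /
      (sΛx2 + (sex2 / sey2) * a * p * sΛy2) ^ 2 <
      (a * sΛx2 * sex2 + γ ^ 2 * a ^ 2 * p * sΛy2 * sey2) /
      (sΛx2 + γ * a * p * sΛy2) ^ 2 := by
    rw [div_lt_div_iff₀ hDs2 hD2]
    have hid : (a * sΛx2 * sex2 + γ ^ 2 * a ^ 2 * p * sΛy2 * sey2) *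
        (sΛx2 + (sex2 / sey2) * a * p * sΛy2) ^ 2 -
        (a * sΛx2 * sex2 + (sex2 / sey2) ^ 2 * a ^ 2 * p * sΛy2 * sey2) *
        (sΛx2 + γ * a * p * sΛy2) ^ 2 =
        (sΛx2 * sey2 + sex2 * (a * p * sΛy2)) * a * sΛx2 * (a * p * sΛy2) *
          (γ * sey2 - sex2) ^ 2 / sey2 ^ 2 := by
      field_simp
      ring
    nlinarith [div_pos (mul_pos (mul_pos (mul_pos (mul_pos
        (by positivity : (0:ℝ) < sΛx2 * sey2 + sex2 * (a * p * sΛy2)) ha) hΛx)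
        (by positivity : (0:ℝ) < a * p * sΛy2)) hsq)
        (by positivity : (0:ℝ) < sey2 ^ 2)]
  have key : L * ((sΛx2 + (sex2 / sey2) * a * p * sΛy2) ^ 2)⁻¹ *
      (a * sΛx2 * sex2 + (sex2 / sey2) ^ 2 * a ^ 2 * p * sΛy2 * sey2) <
      L * ((sΛx2 + γ * a * p * sΛy2) ^ 2)⁻¹ *
      (a * sΛx2 * sex2 + γ ^ 2 * a ^ 2 * p * sΛy2 * sey2) :=
    calc L * ((sΛx2 + (sex2 / sey2) * a * p * sΛy2) ^ 2)⁻¹ *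
        (a * sΛx2 * sex2 + (sex2 / sey2) ^ 2 * a ^ 2 * p * sΛy2 * sey2)
        = L * ((a * sΛx2 * sex2 + (sex2 / sey2) ^ 2 * a ^ 2 * p * sΛy2 * sey2) /
            (sΛx2 + (sex2 / sey2) * a * p * sΛy2) ^ 2) := by ring
      _ < L * ((a * sΛx2 * sex2 + γ ^ 2 * a ^ 2 * p * sΛy2 * sey2) /
            (sΛx2 + γ * a * p * sΛy2) ^ 2) := mul_lt_mul_of_pos_left h2 hL
      _ = L * ((sΛx2 + γ * a * p * sΛy2) ^ 2)⁻¹ *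
            (a * sΛx2 * sex2 + γ ^ 2 * a ^ 2 * p * sΛy2 * sey2) := by ring
  linarith
end
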